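/- Let Γ ⊊ Z^d be (K,Q)-relatively dense and H = -Δ + V with V bounded. Then for all t ≥ 0: E_Γ(H,t) - E_∅(H) ≥ (Q/(2dK-1)) (Y^{-(2dK-1)} - (Y + t)^{-(2dK-1)}), where Y = 2d + 1 + spr(V). -/

import Mathlib

open scoped BigOperators

noncomputable section

/-- `ℤ^d`. -/
abbrev Zd (d : ℕ) := Fin d → ℤ

/-- `ℓ¹` distance on `ℤ^d`. -/
def dist1 {d : ℕ} (x y : Zd d) : ℕ := ∑ i, (x i - y i).natAbs

/-- the `i`-th coordinate unit vector. -/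
def unitVec {d : ℕ} (i : Fin d) : Zd d := fun j => if j = i then 1 else 0

/-- the negative discrete Laplacian: `(-Δφ)(x) = Σ_{‖x-y‖₁=1} (φ(x) - φ(y))`. -/
def negLap {d : ℕ} (φ : Zd d → ℝ) (x : Zd d) : ℝ :=
  ∑ i, ((φ x - φ (x + unitVec i)) + (φ x - φ (x - unitVec i)))

/-- characteristic function of a set. -/
def chi {d : ℕ} (A : Set (Zd d)) : Zd d → ℝ := A.indicator fun _ => 1

/-- edge boundary `∂A = {(x,y) ∈ A × Aᶜ : ‖x-y‖₁ = 1}`. -/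
def bdry {d : ℕ} (A : Set (Zd d)) : Set (Zd d × Zd d) :=
  {p | p.1 ∈ A ∧ p.2 ∉ A ∧ dist1 p.1 p.2 = 1}

/-- squared `ℓ²` norm (for finitely supported functions). -/
def norm2 {d : ℕ} (φ : Zd d → ℝ) : ℝ := ∑ᶠ x, φ x ^ 2

/-- quadratic form `⟨φ, (-Δ + V)φ⟩` (for finitely supported `φ`). -/
def energy {d : ℕ} (V : Zd d → ℝ) (φ : Zd d → ℝ) : ℝ :=
  ∑ᶠ x, φ x * (negLap φ x + V x * φ x)

/-- `V` is a bounded potential. -/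
def BddPot {d : ℕ} (V : Zd d → ℝ) : Prop := ∃ C, ∀ x, |V x| ≤ C

/-- the spread `spr(V) = sup V - inf V` of a bounded potential. -/
def spr {d : ℕ} (V : Zd d → ℝ) : ℝ := sSup (Set.range V) - sInf (Set.range V)

/-- `E_∅(H) = inf σ(-Δ + V)`, characterized variationally over normalized finitely
supported functions. -/
def E0 {d : ℕ} (V : Zd d → ℝ) : ℝ :=
  sInf {r | ∃ φ : Zd d → ℝ, (Function.support φ).Finite ∧ norm2 φ = 1 ∧ r = energy V φ}

/-- `E_Γ(H) = inf σ(H_Γ)`, the ground state energy of the `Γ`-trimmed operator,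
characterized variationally over normalized finitely supported functions vanishing on `Γ`. -/
def EG {d : ℕ} (V : Zd d → ℝ) (Γ : Set (Zd d)) : ℝ :=
  sInf {r | ∃ φ : Zd d → ℝ, (Function.support φ).Finite ∧ (∀ x ∈ Γ, φ x = 0) ∧
    norm2 φ = 1 ∧ r = energy V φ}

/-- `E_Γ(H,t) = inf σ(H + t χ_Γ)`. -/
def EGt {d : ℕ} (V : Zd d → ℝ) (Γ : Set (Zd d)) (t : ℝ) : ℝ :=
  E0 fun x => V x + t * chi Γ x

/-- the open box `Λ⁰_K(ζ) = {y : ‖y-ζ‖_∞ < K/2}`. -/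
def Lam0 {d : ℕ} (K : ℕ) (ζ : Zd d) : Set (Zd d) := {y | ∀ i, 2 * (y i - ζ i).natAbs < K}

/-- `Γ` is `(K,Q)`-relatively dense: `|Γ ∩ Λ⁰_K(ζ)| ≥ Q` for all `ζ ∈ KZ^d`. -/
def RelDense {d : ℕ} (Γ : Set (Zd d)) (K Q : ℕ) : Prop :=
  ∀ z : Zd d, Q ≤ (Γ ∩ Lam0 K fun i => (K : ℤ) * z i).ncard

/-- `K_* = K` if `K` is odd, `K+1` if `K` is even. -/
def Kstar (K : ℕ) : ℕ := if K % 2 = 1 then K else K + 1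

/-- `⟨χ_A, (-Δ)χ_A⟩` for a finite set `A`; for `A ⊆ Γᶜ` this coincides with
`⟨χ_A, (-Δ_Γ)χ_A⟩` for the `Γ`-trimmed Laplacian. -/
def qform {d : ℕ} (A : Finset (Zd d)) : ℝ := ∑ x ∈ A, negLap (chi ↑A) x

/-- Cheeger constant `β(Γ)` of the `Γ`-trimmed Laplacian. -/
def betaG {d : ℕ} (Γ : Set (Zd d)) : ℝ :=
  sInf {r | ∃ A : Finset (Zd d), A.Nonempty ∧ (↑A : Set (Zd d)) ⊆ Γᶜ ∧
    r = qform A / A.card}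

/-- `⟨χ_A, H(t)χ_A⟩ = ⟨χ_A, (-Δ)χ_A⟩ + t|A ∩ Γ|` for a finite set `A`. -/
def qformT {d : ℕ} (Γ : Set (Zd d)) (t : ℝ) (A : Finset (Zd d)) : ℝ :=
  qform A + t * ((↑A ∩ Γ : Set (Zd d)).ncard)

/-- Cheeger constant `β(t)` of `H(t) = -Δ + t χ_Γ`. -/
def betaT {d : ℕ} (Γ : Set (Zd d)) (t : ℝ) : ℝ :=
  sInf {r | ∃ A : Finset (Zd d), A.Nonempty ∧ r = qformT Γ t A / A.card}

/-- the box `Λ_L(x₀) = {y : ‖y-x₀‖_∞ ≤ L/2}`. -/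
def box {d : ℕ} (L : ℕ) (x₀ : Zd d) : Set (Zd d) := {y | ∀ i, 2 * (y i - x₀ i).natAbs ≤ L}

/-- `φ` is an eigenfunction of `H_Λ = (-Δ + V)_Λ` with eigenvalue `E`. -/
def eigOn {d : ℕ} (V : Zd d → ℝ) (Λ : Set (Zd d)) (φ : Zd d → ℝ) (E : ℝ) : Prop :=
  (∀ x ∉ Λ, φ x = 0) ∧ ∀ x ∈ Λ, negLap φ x + V x * φ x = E * φ x

/-- `E^Λ = inf σ(H_Λ)`, variationally. -/
def Ebox {d : ℕ} (V : Zd d → ℝ) (Λ : Set (Zd d)) : ℝ :=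
  sInf {r | ∃ φ : Zd d → ℝ, (∀ x ∉ Λ, φ x = 0) ∧ norm2 φ = 1 ∧ r = energy V φ}

/-!
Restrict everything to a finite union `Λ` of cells of side `K` covering a test function, and let
`E(s)` be the ground state energy of `-Δ + V + s χ_Γ` on `Λ`, attained by some `ψ_s ≥ 0`.
Testing `E(a)` with `ψ_b` gives `E(b) - E(a) ≥ (b - a) ⟨ψ_b, χ_Γ ψ_b⟩`. The eigenvalue equation
gives `Σ_{y ~ x} ψ_b y ≤ β ψ_b x` with `β = 2d + spr V + b`. Within a cell, every point at `ℓ¹`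
distance `n + 1` from a point `γ` is a neighbour of one at distance `n`, so the sums of `ψ_b` over
these spheres grow at most like `β ^ n`, and the mass of the cell is controlled by `ψ_b γ ^ 2`.
As each cell contains `Q` points of `Γ`, this gives `⟨ψ_b, χ_Γ ψ_b⟩ ≥ Q β^{-2dK}`. For
`b ≤ a + 1` we have `β ≤ Y + a`, and convexity of `s ↦ (Y + s)^{-(2dK-1)}` turns this into the
claimed bound on `E(b) - E(a)`; unit steps from `0` to `t` add up to the theorem.
-/

namespace Schrodinger

open Function Finset

variable {d : ℕ}

/-! ### Finitely supported functions and the quadratic form -/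

lemma hasFiniteSupport_of_vanishing {φ f : Zd d → ℝ} (hφ : HasFiniteSupport φ)
    (h : ∀ x, φ x = 0 → f x = 0) : HasFiniteSupport f :=
  hφ.subset fun x hx h0 => hx (h x h0)

lemma hasFiniteSupport_of_vanishing_off {Λ : Finset (Zd d)} {φ : Zd d → ℝ}
    (hφ : ∀ x ∉ Λ, φ x = 0) : HasFiniteSupport φ :=
  Λ.finite_toSet.subset fun x hx => by_contra fun h => hx (hφ x h)

lemma hasFiniteSupport_comp_add {φ : Zd d → ℝ} (hφ : HasFiniteSupport φ) (v : Zd d) :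
    HasFiniteSupport fun x => φ (x + v) :=
  hφ.fun_comp_of_injective (add_left_injective v)

lemma finsum_eq_sum_of_vanishing_off {Λ : Finset (Zd d)} {φ f : Zd d → ℝ}
    (hφ : ∀ x ∉ Λ, φ x = 0) (hf : ∀ x, φ x = 0 → f x = 0) : ∑ᶠ x, f x = ∑ x ∈ Λ, f x :=
  finsum_eq_sum_of_support_subset f fun x hx => by_contra fun h => hx (hf x (hφ x h))

lemma norm2_nonneg (φ : Zd d → ℝ) : 0 ≤ norm2 φ :=
  finsum_nonneg fun _ => sq_nonneg _

lemma norm2_single (x : Zd d) : norm2 (Pi.single x (1 : ℝ)) = 1 := by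
  rw [norm2, finsum_eq_single _ x fun y hy => by simp [hy]]
  simp

lemma finsum_mul_negLap {φ : Zd d → ℝ} (hφ : HasFiniteSupport φ) (ψ : Zd d → ℝ) :
    ∑ᶠ x, φ x * negLap ψ x =
      ∑ᶠ x, ∑ i, (φ x - φ (x + unitVec i)) * (ψ x - ψ (x + unitVec i)) := by
  simp only [negLap, mul_sum]
  rw [finsum_sum_comm _ _ fun i _ => hφ.fun_mul_left _,
    finsum_sum_comm _ (fun x i => (φ x - φ (x + unitVec i)) * (ψ x - ψ (x + unitVec i)))
      fun i _ => (hφ.fun_sub (hasFiniteSupport_comp_add hφ _)).fun_mul_left _]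
  refine sum_congr rfl fun i _ => ?_
  have hshift : ∑ᶠ x, φ x * (ψ x - ψ (x - unitVec i)) =
      ∑ᶠ x, φ (x + unitVec i) * (ψ (x + unitVec i) - ψ x) := by
    rw [← finsum_comp_equiv (Equiv.addRight (unitVec i))]
    simp
  simp only [mul_add]
  rw [finsum_add_distrib (hφ.fun_mul_left _) (hφ.fun_mul_left _), hshift,
    ← finsum_add_distrib (hφ.fun_mul_left _)
      ((hasFiniteSupport_comp_add hφ (unitVec i)).fun_mul_left _)]
  exact finsum_congr fun x => by ring

def formDensity (W φ ψ : Zd d → ℝ) (x : Zd d) : ℝ :=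
  ∑ i, (φ x - φ (x + unitVec i)) * (ψ x - ψ (x + unitVec i)) + W x * φ x * ψ x

def bilinForm (W φ ψ : Zd d → ℝ) : ℝ := ∑ᶠ x, formDensity W φ ψ x

lemma hasFiniteSupport_formDensity (W : Zd d → ℝ) {φ : Zd d → ℝ} (hφ : HasFiniteSupport φ)
    (ψ : Zd d → ℝ) : HasFiniteSupport (formDensity W φ ψ) :=
  (HasFiniteSupport.sum (fun _ => (hφ.fun_sub (hasFiniteSupport_comp_add hφ _)).fun_mul_left _)
    univ).fun_add ((hφ.fun_mul_right W).fun_mul_left ψ)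

lemma formDensity_comm (W φ ψ : Zd d → ℝ) (x : Zd d) :
    formDensity W φ ψ x = formDensity W ψ φ x := by
  unfold formDensity
  congr 1
  · exact sum_congr rfl fun _ _ => mul_comm _ _
  · ring

lemma formDensity_add_smul_left (W φ ψ χ : Zd d → ℝ) (ε : ℝ) (x : Zd d) :
    formDensity W (fun y => φ y + ε * ψ y) χ x =
      formDensity W φ χ x + ε * formDensity W ψ χ x := by
  simp only [formDensity, mul_add, mul_sum]
  rw [add_add_add_comm, ← sum_add_distrib]
  congr 1
  · exact sum_congr rfl fun _ _ => by ring
  · ring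

lemma formDensity_add_smul (W φ ψ : Zd d → ℝ) (ε : ℝ) (x : Zd d) :
    formDensity W (fun y => φ y + ε * ψ y) (fun y => φ y + ε * ψ y) x =
      formDensity W φ φ x + 2 * ε * formDensity W φ ψ x + ε ^ 2 * formDensity W ψ ψ x := by
  rw [formDensity_add_smul_left, formDensity_comm W φ, formDensity_comm W ψ,
    formDensity_add_smul_left, formDensity_add_smul_left, formDensity_comm W ψ φ]
  ring

lemma finsum_mul_schrodinger (W : Zd d → ℝ) {φ : Zd d → ℝ} (hφ : HasFiniteSupport φ)
    (ψ : Zd d → ℝ) : ∑ᶠ x, φ x * (negLap ψ x + W x * ψ x) = bilinForm W φ ψ := by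
  simp only [mul_add]
  rw [finsum_add_distrib (hφ.fun_mul_left _) (hφ.fun_mul_left _), finsum_mul_negLap hφ,
    bilinForm]
  unfold formDensity
  rw [finsum_add_distrib (HasFiniteSupport.sum (fun _ => (hφ.fun_sub
      (hasFiniteSupport_comp_add hφ _)).fun_mul_left _) univ) ((hφ.fun_mul_right W).fun_mul_left ψ)]
  congr 1
  exact finsum_congr fun x => by ring

lemma energy_eq_bilinForm (W : Zd d → ℝ) {φ : Zd d → ℝ} (hφ : HasFiniteSupport φ) :
    energy W φ = bilinForm W φ φ :=
  finsum_mul_schrodinger W hφ φ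

lemma bilinForm_comm (W φ ψ : Zd d → ℝ) : bilinForm W φ ψ = bilinForm W ψ φ :=
  finsum_congr (formDensity_comm W φ ψ)

lemma bilinForm_add_smul (W : Zd d → ℝ) {φ ψ : Zd d → ℝ} (hφ : HasFiniteSupport φ)
    (hψ : HasFiniteSupport ψ) (ε : ℝ) :
    bilinForm W (fun x => φ x + ε * ψ x) (fun x => φ x + ε * ψ x) =
      bilinForm W φ φ + 2 * ε * bilinForm W φ ψ + ε ^ 2 * bilinForm W ψ ψ := by
  have h₁ := hasFiniteSupport_formDensity W hφ φ
  have h₂ := (hasFiniteSupport_formDensity W hφ ψ).fun_mul_right (fun _ => 2 * ε)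
  have h₃ := (hasFiniteSupport_formDensity W hψ ψ).fun_mul_right (fun _ => ε ^ 2)
  simp only [bilinForm, formDensity_add_smul, mul_finsum]
  rw [finsum_add_distrib (h₁.fun_add h₂) h₃, finsum_add_distrib h₁ h₂]

lemma energy_sub_const (W : Zd d → ℝ) {φ : Zd d → ℝ} (hφ : HasFiniteSupport φ) (E : ℝ) :
    energy (fun x => W x - E) φ = energy W φ - E * norm2 φ := by
  rw [energy, energy, norm2, mul_finsum, ← finsum_sub_distrib (hφ.fun_mul_left _)
    (hasFiniteSupport_of_vanishing hφ fun x h => by simp [h])]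
  exact finsum_congr fun x => by ring

lemma energy_add_mul_eq (W χ : Zd d → ℝ) (a b : ℝ) {φ : Zd d → ℝ} (hφ : HasFiniteSupport φ) :
    energy (fun x => W x + a * χ x) φ =
      energy (fun x => W x + b * χ x) φ - (b - a) * ∑ᶠ x, χ x * φ x ^ 2 := by
  rw [energy, energy, mul_finsum, ← finsum_sub_distrib (hφ.fun_mul_left _)
    (hasFiniteSupport_of_vanishing hφ fun x h => by simp [h])]
  exact finsum_congr fun x => by ring

lemma mul_norm2_le_energy {W : Zd d → ℝ} {c : ℝ} (hW : ∀ x, c ≤ W x) {φ : Zd d → ℝ}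
    (hφ : HasFiniteSupport φ) : c * norm2 φ ≤ energy W φ := by
  have : 0 ≤ energy (fun x => W x - c) φ := by
    rw [energy_eq_bilinForm _ hφ]
    refine finsum_nonneg fun x => add_nonneg (sum_nonneg fun _ _ => mul_self_nonneg _) ?_
    rw [mul_assoc]
    exact mul_nonneg (sub_nonneg.2 (hW x)) (mul_self_nonneg _)
  linarith [energy_sub_const W hφ c]

lemma le_energy_of_norm2_eq_one {W : Zd d → ℝ} {c : ℝ} (hW : ∀ x, c ≤ W x) {φ : Zd d → ℝ}
    (hφ : HasFiniteSupport φ) (hφ1 : norm2 φ = 1) : c ≤ energy W φ := by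
  simpa [hφ1] using mul_norm2_le_energy hW hφ

lemma energy_abs_le (W : Zd d → ℝ) {φ : Zd d → ℝ} (hφ : HasFiniteSupport φ) :
    energy W (fun x => |φ x|) ≤ energy W φ := by
  have habs : HasFiniteSupport fun x => |φ x| :=
    hasFiniteSupport_of_vanishing hφ fun x h => by simp [h]
  rw [energy_eq_bilinForm W hφ, energy_eq_bilinForm W habs]
  refine finsum_le_finsum' (hasFiniteSupport_formDensity W habs _)
    (hasFiniteSupport_formDensity W hφ φ) fun x => add_le_add
      (sum_le_sum fun i _ => ?_) (by rw [mul_assoc, abs_mul_abs_self, mul_assoc])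
  dsimp only
  rw [← abs_mul_abs_self (|φ x| - _), ← abs_mul_abs_self (φ x - _)]
  exact mul_self_le_mul_self (abs_nonneg _) (abs_abs_sub_abs_le_abs_sub _ _)

lemma negLap_const_mul (c : ℝ) (φ : Zd d → ℝ) (x : Zd d) :
    negLap (fun y => c * φ y) x = c * negLap φ x := by
  simp only [negLap, mul_sum]
  exact sum_congr rfl fun _ _ => by ring

lemma energy_const_mul (W : Zd d → ℝ) (c : ℝ) (φ : Zd d → ℝ) :
    energy W (fun y => c * φ y) = c ^ 2 * energy W φ := by
  rw [energy, energy, mul_finsum]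
  exact finsum_congr fun x => by rw [negLap_const_mul]; ring

lemma norm2_const_mul (c : ℝ) (φ : Zd d → ℝ) :
    norm2 (fun y => c * φ y) = c ^ 2 * norm2 φ := by
  rw [norm2, norm2, mul_finsum]
  exact finsum_congr fun x => by ring

/-! ### Ground states on finite sets -/

lemma mul_norm2_le_energy_of_forall {W : Zd d → ℝ} {Λ : Finset (Zd d)} {E : ℝ}
    (hmin : ∀ φ, (∀ x ∉ Λ, φ x = 0) → norm2 φ = 1 → E ≤ energy W φ)
    {φ : Zd d → ℝ} (hφ : ∀ x ∉ Λ, φ x = 0) : E * norm2 φ ≤ energy W φ := by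
  have hnorm2 : norm2 φ = ∑ x ∈ Λ, φ x ^ 2 :=
    finsum_eq_sum_of_vanishing_off hφ fun x h => by simp [h]
  rcases (norm2_nonneg φ).eq_or_lt with h0 | hpos
  · obtain rfl : φ = 0 := funext fun x => by
      by_cases hx : x ∈ Λ
      · exact pow_eq_zero_iff two_ne_zero |>.1 <|
          (sum_eq_zero_iff_of_nonneg fun _ _ => sq_nonneg _).1 (hnorm2 ▸ h0.symm) x hx
      · exact hφ x hx
    simp [energy, norm2]
  · set c := (√(norm2 φ))⁻¹
    have hc : c ^ 2 * norm2 φ = 1 := by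
      rw [inv_pow, Real.sq_sqrt hpos.le, inv_mul_cancel₀ hpos.ne']
    have := hmin (fun y => c * φ y) (fun x hx => by simp [hφ x hx])
      ((norm2_const_mul c φ).trans hc)
    rw [energy_const_mul] at this
    calc E * norm2 φ ≤ c ^ 2 * energy W φ * norm2 φ := mul_le_mul_of_nonneg_right this hpos.le
      _ = energy W φ := by rw [mul_right_comm, hc, one_mul]

lemma eigOn_of_forall_mul_norm2_le {W ψ : Zd d → ℝ} {Λ : Set (Zd d)} {E : ℝ}
    (hψ : HasFiniteSupport ψ) (hψΛ : ∀ x ∉ Λ, ψ x = 0)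
    (hmin : ∀ φ, HasFiniteSupport φ → (∀ x ∉ Λ, φ x = 0) → E * norm2 φ ≤ energy W φ)
    (hψE : energy W ψ = E * norm2 ψ) : eigOn W Λ ψ E := by
  refine ⟨hψΛ, fun x hx => ?_⟩
  set W' : Zd d → ℝ := fun y => W y - E
  set δ : Zd d → ℝ := Pi.single x 1
  have hδ : HasFiniteSupport δ := (Set.finite_singleton x).subset Pi.support_single_subset
  have hδΛ : ∀ y ∉ Λ, δ y = 0 :=
    fun y hy => Pi.single_eq_of_ne (ne_of_mem_of_not_mem hx hy).symm _
  have hψ0 : bilinForm W' ψ ψ = 0 := by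
    rw [← energy_eq_bilinForm _ hψ, energy_sub_const W hψ, hψE, sub_self]
  -- `ε ↦ ⟨ψ + εδ, (H - E)(ψ + εδ)⟩` is a nonnegative quadratic polynomial vanishing at `0`
  have hquad (ε : ℝ) : 0 ≤ bilinForm W' δ δ * (ε * ε) + 2 * bilinForm W' ψ δ * ε + 0 := by
    have hφ : HasFiniteSupport fun y => ψ y + ε * δ y := hψ.fun_add (hδ.fun_mul_right _)
    have := hmin _ hφ fun y hy => by simp [hψΛ y hy, hδΛ y hy]
    have := bilinForm_add_smul W' hψ hδ ε
    rw [← energy_eq_bilinForm _ hφ, energy_sub_const W hφ, hψ0] at this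
    nlinarith
  have hB : bilinForm W' ψ δ = 0 := by
    have := discrim_le_zero hquad
    rw [discrim] at this
    nlinarith [sq_nonneg (bilinForm W' ψ δ)]
  rw [bilinForm_comm, ← finsum_mul_schrodinger W' hδ,
    finsum_eq_single _ x fun y hy => by simp [δ, hy]] at hB
  simp only [δ, Pi.single_eq_same, one_mul, W'] at hB
  linarith

lemma isCompact_setOf_vanishing_off_sum_sq_eq_one (Λ : Finset (Zd d)) :
    IsCompact {φ : Zd d → ℝ | (∀ x ∉ Λ, φ x = 0) ∧ ∑ x ∈ Λ, φ x ^ 2 = 1} := by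
  refine (isCompact_univ_pi fun _ => isCompact_Icc (a := (-1 : ℝ)) (b := 1)).of_isClosed_subset
    ?_ ?_
  · have hS : {φ : Zd d → ℝ | (∀ x ∉ Λ, φ x = 0) ∧ ∑ x ∈ Λ, φ x ^ 2 = 1} =
        (⋂ x, ⋂ (_ : x ∉ Λ), {φ | φ x = 0}) ∩ {φ | ∑ x ∈ Λ, φ x ^ 2 = 1} := by
      ext; simp
    rw [hS]
    exact (isClosed_iInter fun x => isClosed_iInter fun _ =>
      isClosed_eq (continuous_apply x) continuous_const).inter
      (isClosed_eq (by fun_prop) continuous_const)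
  · rintro φ ⟨hφ, h1⟩ x -
    rw [Set.mem_Icc, ← abs_le, ← sq_le_one_iff_abs_le_one]
    by_cases hx : x ∈ Λ
    · exact h1 ▸ single_le_sum (fun y _ => sq_nonneg (φ y)) hx
    · simp [hφ x hx]

lemma exists_isMinOn_energy (W : Zd d → ℝ) {Λ : Finset (Zd d)} (hΛ : Λ.Nonempty) :
    ∃ ψ, (∀ x ∉ Λ, ψ x = 0) ∧ norm2 ψ = 1 ∧
      ∀ φ, (∀ x ∉ Λ, φ x = 0) → norm2 φ = 1 → energy W ψ ≤ energy W φ := by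
  have hnorm2 {φ : Zd d → ℝ} (hφ : ∀ x ∉ Λ, φ x = 0) : norm2 φ = ∑ x ∈ Λ, φ x ^ 2 :=
    finsum_eq_sum_of_vanishing_off hφ fun x h => by simp [h]
  have henergy {φ : Zd d → ℝ} (hφ : ∀ x ∉ Λ, φ x = 0) :
      energy W φ = ∑ x ∈ Λ, φ x * (negLap φ x + W x * φ x) :=
    finsum_eq_sum_of_vanishing_off hφ fun x h => by simp [h]
  obtain ⟨x₀, hx₀⟩ := hΛ
  have hδ : ∀ x ∉ Λ, (Pi.single x₀ (1 : ℝ) : Zd d → ℝ) x = 0 :=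
    fun x hx => Pi.single_eq_of_ne (ne_of_mem_of_not_mem hx₀ hx).symm _
  have hcont : Continuous fun φ : Zd d → ℝ => ∑ x ∈ Λ, φ x * (negLap φ x + W x * φ x) := by
    unfold negLap
    fun_prop
  obtain ⟨ψ, ⟨hψΛ, hψ1⟩, hmin⟩ := (isCompact_setOf_vanishing_off_sum_sq_eq_one Λ).exists_isMinOn
    ⟨_, hδ, (hnorm2 hδ).symm.trans (norm2_single x₀)⟩ hcont.continuousOn
  refine ⟨ψ, hψΛ, (hnorm2 hψΛ).trans hψ1, fun φ hφΛ hφ1 => ?_⟩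
  rw [henergy hψΛ, henergy hφΛ]
  exact hmin ⟨hφΛ, (hnorm2 hφΛ).symm.trans hφ1⟩

theorem exists_ground_state (W : Zd d → ℝ) {Λ : Finset (Zd d)} (hΛ : Λ.Nonempty) :
    ∃ ψ, (∀ x, 0 ≤ ψ x) ∧ norm2 ψ = 1 ∧ energy W ψ = Ebox W Λ ∧
      eigOn W Λ ψ (Ebox W Λ) := by
  obtain ⟨ψ₀, hψ₀Λ, hψ₀1, hψ₀min⟩ := exists_isMinOn_energy W hΛ
  set ψ := fun x => |ψ₀ x|
  have hψΛ : ∀ x ∉ Λ, ψ x = 0 := fun x hx => by simp [ψ, hψ₀Λ x hx]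
  have hψ1 : norm2 ψ = 1 := by simpa [norm2, ψ, sq_abs] using hψ₀1
  have hψmin : ∀ φ, (∀ x ∉ Λ, φ x = 0) → norm2 φ = 1 → energy W ψ ≤ energy W φ :=
    fun φ hφΛ hφ1 => (energy_abs_le W (hasFiniteSupport_of_vanishing_off hψ₀Λ)).trans
      (hψ₀min φ hφΛ hφ1)
  have hEbox : Ebox W Λ = energy W ψ :=
    IsLeast.csInf_eq ⟨⟨ψ, hψΛ, hψ1, rfl⟩, by rintro _ ⟨φ, hφΛ, hφ1, rfl⟩; exact hψmin φ hφΛ hφ1⟩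
  refine ⟨ψ, fun x => abs_nonneg _, hψ1, hEbox.symm,
    eigOn_of_forall_mul_norm2_le (hasFiniteSupport_of_vanishing_off hψΛ) hψΛ
      (fun φ _ hφΛ => hEbox ▸ mul_norm2_le_energy_of_forall hψmin hφΛ) ?_⟩
  rw [hψ1, mul_one, hEbox]

lemma sum_neighbors_eq_of_eigOn {W ψ : Zd d → ℝ} {Λ : Set (Zd d)} {E : ℝ} (h : eigOn W Λ ψ E)
    {x : Zd d} (hx : x ∈ Λ) :
    ∑ i, (ψ (x + unitVec i) + ψ (x - unitVec i)) = (2 * d + W x - E) * ψ x := by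
  have := h.2 x hx
  rw [negLap, show ∑ i, (ψ x - ψ (x + unitVec i) + (ψ x - ψ (x - unitVec i))) =
      ∑ _ : Fin d, 2 * ψ x - ∑ i, (ψ (x + unitVec i) + ψ (x - unitVec i)) by
    rw [← sum_sub_distrib]; exact sum_congr rfl fun _ _ => by ring] at this
  rw [sum_const, card_univ, Fintype.card_fin, nsmul_eq_mul] at this
  linarith

lemma Ebox_le_energy {W : Zd d → ℝ} {c : ℝ} (hW : ∀ x, c ≤ W x) {Λ : Finset (Zd d)}
    {φ : Zd d → ℝ} (hφΛ : ∀ x ∉ Λ, φ x = 0) (hφ1 : norm2 φ = 1) : Ebox W Λ ≤ energy W φ :=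
  csInf_le ⟨c, by
    rintro _ ⟨ψ, hψΛ, hψ1, rfl⟩
    exact le_energy_of_norm2_eq_one hW (hasFiniteSupport_of_vanishing_off hψΛ) hψ1⟩
    ⟨φ, hφΛ, hφ1, rfl⟩

lemma sub_mul_finsum_le_Ebox_sub {W χ ψ : Zd d → ℝ} {a b c : ℝ}
    (hW : ∀ x, c ≤ W x + a * χ x) {Λ : Finset (Zd d)} (hψΛ : ∀ x ∉ Λ, ψ x = 0)
    (hψ1 : norm2 ψ = 1)
    (hψE : energy (fun x => W x + b * χ x) ψ = Ebox (fun x => W x + b * χ x) Λ) :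
    (b - a) * ∑ᶠ x, χ x * ψ x ^ 2 ≤
      Ebox (fun x => W x + b * χ x) Λ - Ebox (fun x => W x + a * χ x) Λ := by
  have := Ebox_le_energy hW hψΛ hψ1
  rw [energy_add_mul_eq W χ a b (hasFiniteSupport_of_vanishing_off hψΛ), hψE] at this
  linarith

/-! ### Geometric growth on boxes -/

lemma dist1_add_smul_unitVec_add_one {y γ : Zd d} {i : Fin d} {s : ℤ}
    (h : (y i + s - γ i).natAbs + 1 = (y i - γ i).natAbs) :
    dist1 (y + s • unitVec i) γ + 1 = dist1 y γ := by
  have key (j : Fin d) : ((y + s • unitVec i) j - γ j).natAbs + (if i = j then 1 else 0) =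
      (y j - γ j).natAbs := by
    by_cases hj : i = j
    · subst hj; simpa [unitVec] using h
    · simp [unitVec, hj, Ne.symm hj]
  simp only [dist1, ← sum_congr rfl fun j _ => key j, sum_add_distrib, sum_ite_eq, mem_univ,
    if_true]

def rect (lo hi : Fin d → ℤ) : Finset (Zd d) := Fintype.piFinset fun i => Icc (lo i) (hi i)

lemma mem_rect {lo hi : Fin d → ℤ} {x : Zd d} :
    x ∈ rect lo hi ↔ ∀ i, lo i ≤ x i ∧ x i ≤ hi i := by
  simp [rect]

section Rect

variable {lo hi : Fin d → ℤ} {γ : Zd d}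

lemma exists_neighbor_of_dist1_eq_succ {y : Zd d} {n : ℕ} (hy : y ∈ rect lo hi)
    (hγ : γ ∈ rect lo hi) (hn : dist1 y γ = n + 1) :
    ∃ x ∈ rect lo hi, dist1 x γ = n ∧ ∃ i, y = x + unitVec i ∨ y = x - unitVec i := by
  obtain ⟨i, hne⟩ : ∃ i, y i ≠ γ i := by
    by_contra! h
    simp [dist1, h] at hn
  rw [mem_rect] at hy hγ
  obtain ⟨s, hs, hdist, hlo, hhi⟩ : ∃ s : ℤ, (s = 1 ∨ s = -1) ∧
      (y i + s - γ i).natAbs + 1 = (y i - γ i).natAbs ∧ lo i ≤ y i + s ∧ y i + s ≤ hi i := by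
    have := hy i
    have := hγ i
    rcases hne.lt_or_gt with h | h
    · exact ⟨1, by omega⟩
    · exact ⟨-1, by omega⟩
  refine ⟨y + s • unitVec i, ?_, by have := dist1_add_smul_unitVec_add_one hdist; omega, i, ?_⟩
  · refine mem_rect.2 fun j => ?_
    by_cases hj : j = i
    · subst hj; simpa [unitVec] using ⟨hlo, hhi⟩
    · simpa [unitVec, hj] using hy j
  · rcases hs with rfl | rfl
    · right; simp
    · left; simp

variable {ψ : Zd d → ℝ} {β : ℝ} (hψ : ∀ x, 0 ≤ ψ x)
  (hβ : ∀ x ∈ rect lo hi, ∑ i, (ψ (x + unitVec i) + ψ (x - unitVec i)) ≤ β * ψ x)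
include hψ hβ

lemma sum_sphere_succ_le (hγ : γ ∈ rect lo hi) (n : ℕ) :
    ∑ y ∈ rect lo hi with dist1 y γ = n + 1, ψ y ≤
      β * ∑ x ∈ rect lo hi with dist1 x γ = n, ψ x := by
  classical
  set nbr : Zd d × Fin d × Bool → Zd d :=
    fun p => bif p.2.2 then p.1 + unitVec p.2.1 else p.1 - unitVec p.2.1
  have hcover : {y ∈ rect lo hi | dist1 y γ = n + 1} ⊆
      ({x ∈ rect lo hi | dist1 x γ = n} ×ˢ univ).image nbr := by
    intro y hy
    obtain ⟨hyC, hyn⟩ := mem_filter.1 hy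
    obtain ⟨x, hxC, hxn, i, hyx | hyx⟩ := exists_neighbor_of_dist1_eq_succ hyC hγ hyn
    · exact mem_image.2 ⟨(x, i, true), by simp [hxC, hxn], by simp [nbr, hyx]⟩
    · exact mem_image.2 ⟨(x, i, false), by simp [hxC, hxn], by simp [nbr, hyx]⟩
  calc ∑ y ∈ rect lo hi with dist1 y γ = n + 1, ψ y
      ≤ ∑ y ∈ ({x ∈ rect lo hi | dist1 x γ = n} ×ˢ univ).image nbr, ψ y :=
        sum_le_sum_of_subset_of_nonneg hcover fun _ _ _ => hψ _
    _ ≤ ∑ p ∈ {x ∈ rect lo hi | dist1 x γ = n} ×ˢ univ, ψ (nbr p) :=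
        sum_image_le_of_nonneg fun _ _ => hψ _
    _ = ∑ x ∈ rect lo hi with dist1 x γ = n, ∑ i, (ψ (x + unitVec i) + ψ (x - unitVec i)) := by
        rw [sum_product]
        refine sum_congr rfl fun x _ => ?_
        rw [Fintype.sum_prod_type]
        simp [nbr]
    _ ≤ ∑ x ∈ rect lo hi with dist1 x γ = n, β * ψ x :=
        sum_le_sum fun x hx => hβ x (mem_filter.1 hx).1
    _ = β * ∑ x ∈ rect lo hi with dist1 x γ = n, ψ x := (mul_sum _ _ _).symm

lemma sum_sphere_le_pow (hβ0 : 0 ≤ β) (hγ : γ ∈ rect lo hi) (n : ℕ) :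
    ∑ x ∈ rect lo hi with dist1 x γ = n, ψ x ≤ β ^ n * ψ γ := by
  induction n with
  | zero =>
    have : {x ∈ rect lo hi | dist1 x γ = 0} ⊆ {γ} := by
      intro x hx
      have := (mem_filter.1 hx).2
      simp only [dist1, sum_eq_zero_iff, mem_univ, Int.natAbs_eq_zero, sub_eq_zero,
        true_imp_iff] at this
      simp [funext this]
    simpa using sum_le_sum_of_subset_of_nonneg this fun _ _ _ => hψ _
  | succ n ih =>
    calc _ ≤ β * (β ^ n * ψ γ) :=
          (sum_sphere_succ_le hψ hβ hγ n).trans (mul_le_mul_of_nonneg_left ih hβ0)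
      _ = β ^ (n + 1) * ψ γ := by ring

lemma sub_one_mul_sum_sq_le (hβ1 : 1 ≤ β) (hγ : γ ∈ rect lo hi) {m : ℕ}
    (hm : ∀ x ∈ rect lo hi, dist1 x γ ≤ m) :
    (β - 1) * ∑ x ∈ rect lo hi, ψ x ^ 2 ≤ β ^ (2 * m + 1) * ψ γ ^ 2 := by
  have hβ0 : 0 ≤ β := zero_le_one.trans hβ1
  have hmax (x) (hx : x ∈ rect lo hi) : ψ x ≤ β ^ m * ψ γ :=
    calc ψ x ≤ ∑ y ∈ rect lo hi with dist1 y γ = dist1 x γ, ψ y :=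
          single_le_sum (fun y _ => hψ y) (mem_filter.2 ⟨hx, rfl⟩)
      _ ≤ β ^ dist1 x γ * ψ γ := sum_sphere_le_pow hψ hβ hβ0 hγ _
      _ ≤ β ^ m * ψ γ := mul_le_mul_of_nonneg_right (pow_le_pow_right₀ hβ1 (hm x hx)) (hψ γ)
  have hsum : ∑ x ∈ rect lo hi, ψ x ≤ (∑ n ∈ range (m + 1), β ^ n) * ψ γ := by
    rw [← sum_fiberwise_of_maps_to (g := fun x => dist1 x γ) (t := range (m + 1))
      fun x hx => mem_range.2 (Nat.lt_succ_of_le (hm x hx)), sum_mul]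
    exact sum_le_sum fun n _ => sum_sphere_le_pow hψ hβ hβ0 hγ n
  have hgeom : (∑ n ∈ range (m + 1), β ^ n) * (β - 1) = β ^ (m + 1) - 1 :=
    geom_sum_mul β (m + 1)
  calc (β - 1) * ∑ x ∈ rect lo hi, ψ x ^ 2
      ≤ (β - 1) * (β ^ m * ψ γ * ∑ x ∈ rect lo hi, ψ x) := by
        refine mul_le_mul_of_nonneg_left ?_ (by linarith)
        rw [mul_sum]
        exact sum_le_sum fun x hx => by
          rw [sq]; exact mul_le_mul_of_nonneg_right (hmax x hx) (hψ x)
    _ ≤ (β - 1) * (β ^ m * ψ γ * ((∑ n ∈ range (m + 1), β ^ n) * ψ γ)) :=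
        mul_le_mul_of_nonneg_left (mul_le_mul_of_nonneg_left hsum
          (mul_nonneg (pow_nonneg hβ0 m) (hψ γ))) (by linarith)
    _ = β ^ m * (β ^ (m + 1) - 1) * ψ γ ^ 2 := by rw [← hgeom]; ring
    _ ≤ β ^ m * β ^ (m + 1) * ψ γ ^ 2 := by gcongr; linarith
    _ = β ^ (2 * m + 1) * ψ γ ^ 2 := by ring

end Rect

/-! ### Cells and the mass on `Γ` -/

def cellIndex (K : ℕ) (x : Zd d) : Zd d := fun i => (x i + K / 2) / K

def cell (K : ℕ) (z : Zd d) : Finset (Zd d) :=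
  rect (fun i => K * z i - K / 2) (fun i => K * z i - K / 2 + K - 1)

variable {K : ℕ}

lemma mem_cell_iff (hK : 0 < K) {x z : Zd d} : x ∈ cell K z ↔ cellIndex K x = z := by
  have hK' : (0 : ℤ) < K := by exact_mod_cast hK
  simp only [cell, mem_rect, cellIndex, funext_iff]
  refine forall_congr' fun i => ?_
  rw [Int.ediv_eq_iff_of_pos hK', mul_comm]
  omega

lemma mem_cell_cellIndex (hK : 0 < K) (x : Zd d) : x ∈ cell K (cellIndex K x) :=
  (mem_cell_iff hK).2 rfl

lemma pairwiseDisjoint_cell (hK : 0 < K) (Z : Set (Zd d)) : Z.PairwiseDisjoint (cell K) :=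
  fun _ _ _ _ hne => disjoint_left.2 fun _ h₁ h₂ =>
    hne (((mem_cell_iff hK).1 h₁).symm.trans ((mem_cell_iff hK).1 h₂))

lemma exists_cells_cover (hK : 0 < K) {φ : Zd d → ℝ} (hφ : HasFiniteSupport φ) :
    ∃ Z : Finset (Zd d), (Z.biUnion (cell K)).Nonempty ∧ ∀ x ∉ Z.biUnion (cell K), φ x = 0 := by
  classical
  have hsub (x) (hx : x ∈ insert 0 hφ.toFinset) :
      x ∈ ((insert 0 hφ.toFinset).image (cellIndex K)).biUnion (cell K) :=
    mem_biUnion.2 ⟨_, mem_image_of_mem _ hx, mem_cell_cellIndex hK x⟩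
  exact ⟨_, ⟨0, hsub 0 (mem_insert_self _ _)⟩, fun x hx =>
    by_contra fun h => hx (hsub x (mem_insert_of_mem (hφ.mem_toFinset.2 h)))⟩

lemma lam0_subset_cell (z : Zd d) : Lam0 K (fun i => K * z i) ⊆ cell K z := by
  intro y hy
  refine mem_rect.2 fun i => ?_
  have := hy i
  dsimp only at this
  generalize (K : ℤ) * z i = c at this ⊢
  omega

lemma dist1_le_of_mem_cell {x γ z : Zd d} (hx : x ∈ cell K z) (hγ : γ ∈ cell K z) :
    dist1 x γ ≤ d * (K - 1) := by
  have h (i : Fin d) : (x i - γ i).natAbs ≤ K - 1 := by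
    have := mem_rect.1 hx i
    have := mem_rect.1 hγ i
    generalize (K : ℤ) * z i = c at *
    omega
  simpa [dist1] using sum_le_sum fun i (_ : i ∈ univ) => h i

lemma chi_nonneg (Γ : Set (Zd d)) (x : Zd d) : 0 ≤ chi Γ x := by
  by_cases hx : x ∈ Γ <;> simp [chi, hx]

lemma chi_le_one (Γ : Set (Zd d)) (x : Zd d) : chi Γ x ≤ 1 := by
  by_cases hx : x ∈ Γ <;> simp [chi, hx]

lemma finsum_chi_mul_sq_nonneg (Γ : Set (Zd d)) (ψ : Zd d → ℝ) :
    0 ≤ ∑ᶠ x, chi Γ x * ψ x ^ 2 :=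
  finsum_nonneg fun x => mul_nonneg (chi_nonneg Γ x) (sq_nonneg _)

variable {Γ : Set (Zd d)} {Q : ℕ}

open scoped Classical in
lemma le_card_filter_mem_cell (hΓ : RelDense Γ K Q) (z : Zd d) :
    Q ≤ #{x ∈ cell K z | x ∈ Γ} :=
  calc Q ≤ (Γ ∩ Lam0 K fun i => (K : ℤ) * z i).ncard := hΓ z
    _ ≤ (↑{x ∈ cell K z | x ∈ Γ} : Set (Zd d)).ncard :=
        Set.ncard_le_ncard (fun x hx => by simpa [hx.1] using lam0_subset_cell z hx.2)
          (finite_toSet _)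
    _ = _ := Set.ncard_coe_finset _

lemma mul_sub_one_mul_sum_sq_cell_le (hΓ : RelDense Γ K Q) {z : Zd d} {ψ : Zd d → ℝ}
    (hψ : ∀ x, 0 ≤ ψ x) {β : ℝ} (hβ1 : 1 ≤ β)
    (hβ : ∀ x ∈ cell K z, ∑ i, (ψ (x + unitVec i) + ψ (x - unitVec i)) ≤ β * ψ x) :
    Q * ((β - 1) * ∑ x ∈ cell K z, ψ x ^ 2) ≤
      β ^ (2 * (d * (K - 1)) + 1) * ∑ x ∈ cell K z, chi Γ x * ψ x ^ 2 := by
  classical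
  set T := {x ∈ cell K z | x ∈ Γ}
  have hchi : ∑ x ∈ cell K z, chi Γ x * ψ x ^ 2 = ∑ γ ∈ T, ψ γ ^ 2 := by
    rw [sum_filter]
    exact sum_congr rfl fun x _ => by by_cases hx : x ∈ Γ <;> simp [chi, hx]
  calc Q * ((β - 1) * ∑ x ∈ cell K z, ψ x ^ 2)
      ≤ #T * ((β - 1) * ∑ x ∈ cell K z, ψ x ^ 2) :=
        mul_le_mul_of_nonneg_right (by exact_mod_cast le_card_filter_mem_cell hΓ z)
          (mul_nonneg (by linarith) (sum_nonneg fun _ _ => sq_nonneg _))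
    _ = ∑ γ ∈ T, (β - 1) * ∑ x ∈ cell K z, ψ x ^ 2 := by rw [sum_const, nsmul_eq_mul]
    _ ≤ ∑ γ ∈ T, β ^ (2 * (d * (K - 1)) + 1) * ψ γ ^ 2 :=
        sum_le_sum fun γ hγ => sub_one_mul_sum_sq_le hψ hβ hβ1 (mem_filter.1 hγ).1
          fun x hx => dist1_le_of_mem_cell hx (mem_filter.1 hγ).1
    _ = β ^ (2 * (d * (K - 1)) + 1) * ∑ x ∈ cell K z, chi Γ x * ψ x ^ 2 := by
        rw [hchi, mul_sum]

theorem mul_sub_one_le_pow_mul_finsum_chi (hK : 0 < K) (hΓ : RelDense Γ K Q)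
    {Z : Finset (Zd d)} {ψ : Zd d → ℝ} (hψ : ∀ x, 0 ≤ ψ x)
    (hψΛ : ∀ x ∉ Z.biUnion (cell K), ψ x = 0) (hψ1 : norm2 ψ = 1) {β : ℝ} (hβ1 : 1 ≤ β)
    (hβ : ∀ x ∈ Z.biUnion (cell K), ∑ i, (ψ (x + unitVec i) + ψ (x - unitVec i)) ≤ β * ψ x) :
    Q * (β - 1) ≤ β ^ (2 * (d * (K - 1)) + 1) * ∑ᶠ x, chi Γ x * ψ x ^ 2 := by
  have hdisj := pairwiseDisjoint_cell hK (Z : Set (Zd d))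
  rw [norm2, finsum_eq_sum_of_vanishing_off hψΛ fun x h => by simp [h], sum_biUnion hdisj]
    at hψ1
  rw [finsum_eq_sum_of_vanishing_off hψΛ fun x h => by simp [h], sum_biUnion hdisj, mul_sum]
  calc Q * (β - 1) = ∑ z ∈ Z, Q * ((β - 1) * ∑ x ∈ cell K z, ψ x ^ 2) := by
        rw [← mul_sum, ← mul_sum, hψ1, mul_one]
    _ ≤ _ := sum_le_sum fun z hz => mul_sub_one_mul_sum_sq_cell_le hΓ hψ hβ1
        fun x hx => hβ x (mem_biUnion.2 ⟨z, hz, hx⟩)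

/-! ### Integrating the coupling derivative -/

variable {V : Zd d → ℝ}

lemma bddBelow_range_of_bddPot (hV : BddPot V) : BddBelow (Set.range V) :=
  let ⟨C, hC⟩ := hV
  ⟨-C, by rintro _ ⟨x, rfl⟩; exact neg_le_of_abs_le (hC x)⟩

lemma bddAbove_range_of_bddPot (hV : BddPot V) : BddAbove (Set.range V) :=
  let ⟨C, hC⟩ := hV
  ⟨C, by rintro _ ⟨x, rfl⟩; exact le_of_abs_le (hC x)⟩

lemma spr_nonneg (hV : BddPot V) : 0 ≤ spr V :=
  sub_nonneg.2 (csInf_le_csSup (Set.range_nonempty V) (bddBelow_range_of_bddPot hV)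
    (bddAbove_range_of_bddPot hV))

lemma sInf_range_le_add_mul_chi (hV : BddPot V) (Γ : Set (Zd d)) {s : ℝ} (hs : 0 ≤ s)
    (x : Zd d) : sInf (Set.range V) ≤ V x + s * chi Γ x := by
  have := csInf_le (bddBelow_range_of_bddPot hV) ⟨x, rfl⟩
  linarith [mul_nonneg hs (chi_nonneg Γ x)]

lemma E0_le_Ebox (hV : BddPot V) {Λ : Finset (Zd d)} (hΛ : Λ.Nonempty) : E0 V ≤ Ebox V Λ := by
  obtain ⟨ψ, -, hψ1, -, hψΛ, -⟩ := exists_ground_state V hΛ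
  refine csInf_le_csInf ⟨sInf (Set.range V), ?_⟩ ⟨_, ψ, hψΛ, hψ1, rfl⟩ ?_
  · rintro _ ⟨φ, hφ, hφ1, rfl⟩
    exact le_energy_of_norm2_eq_one
      (fun x => csInf_le (bddBelow_range_of_bddPot hV) ⟨x, rfl⟩) hφ hφ1
  · rintro _ ⟨φ, hφΛ, hφ1, rfl⟩
    exact ⟨φ, hasFiniteSupport_of_vanishing_off hφΛ, hφ1, rfl⟩

theorem le_pow_mul_finsum_chi_of_eigOn (hd : 0 < d) (hK : 0 < K) (hΓ : RelDense Γ K Q)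
    (hV : BddPot V) {Z : Finset (Zd d)} {ψ : Zd d → ℝ} {b E : ℝ} (hb : 0 ≤ b)
    (hψ : ∀ x, 0 ≤ ψ x) (hψ1 : norm2 ψ = 1)
    (hψeig : eigOn (fun x => V x + b * chi Γ x) (Z.biUnion (cell K)) ψ E)
    (hE : sInf (Set.range V) ≤ E) :
    (Q : ℝ) ≤ (2 * d + spr V + b) ^ (2 * d * K) * ∑ᶠ x, chi Γ x * ψ x ^ 2 := by
  set β := 2 * (d : ℝ) + spr V + b
  have hβ2 : 2 ≤ β := by
    have : (1 : ℝ) ≤ d := by exact_mod_cast hd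
    linarith [spr_nonneg hV]
  have hβ (x) (hx : x ∈ Z.biUnion (cell K)) :
      ∑ i, (ψ (x + unitVec i) + ψ (x - unitVec i)) ≤ β * ψ x := by
    rw [sum_neighbors_eq_of_eigOn hψeig hx]
    refine mul_le_mul_of_nonneg_right ?_ (hψ x)
    have := le_csSup (bddAbove_range_of_bddPot hV) ⟨x, rfl⟩
    have := mul_le_of_le_one_right hb (chi_le_one Γ x)
    simp only [β, spr]
    linarith
  have hexp : 2 * (d * (K - 1)) + 1 ≤ 2 * d * K := by
    have : d * (K - 1) + d = d * K := by
      rw [Nat.mul_sub_one, Nat.sub_add_cancel (Nat.le_mul_of_pos_right d hK)]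
    have : 2 * d * K = 2 * (d * K) := by ring
    omega
  have hpow : β ^ (2 * (d * (K - 1)) + 1) ≤ β ^ (2 * d * K) * (β - 1) :=
    (pow_le_pow_right₀ (by linarith) hexp).trans
      (le_mul_of_one_le_right (pow_nonneg (by linarith) _) (by linarith))
  refine le_of_mul_le_mul_right (a := β - 1) ?_ (by linarith)
  calc (Q : ℝ) * (β - 1) ≤ β ^ (2 * (d * (K - 1)) + 1) * ∑ᶠ x, chi Γ x * ψ x ^ 2 :=
        mul_sub_one_le_pow_mul_finsum_chi hK hΓ hψ hψeig.1 hψ1 (by linarith) hβ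
    _ ≤ β ^ (2 * d * K) * (β - 1) * ∑ᶠ x, chi Γ x * ψ x ^ 2 :=
        mul_le_mul_of_nonneg_right hpow (finsum_chi_mul_sq_nonneg Γ ψ)
    _ = _ := by ring

lemma inv_pow_sub_inv_pow_le {u v : ℝ} (hu : 0 < u) (huv : u ≤ v) (n : ℕ) :
    (u ^ n)⁻¹ - (v ^ n)⁻¹ ≤ n * (v - u) / u ^ (n + 1) := by
  have hv : 0 < v := hu.trans_le huv
  have hbern := one_add_mul_le_pow (a := u / v - 1) (by linarith [div_pos hu hv]) n
  rw [add_sub_cancel] at hbern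
  have hvn : (v ^ n)⁻¹ = (u ^ n)⁻¹ * (u / v) ^ n := by
    rw [div_pow]; field_simp
  calc (u ^ n)⁻¹ - (v ^ n)⁻¹ = (u ^ n)⁻¹ * (1 - (u / v) ^ n) := by rw [hvn]; ring
    _ ≤ (u ^ n)⁻¹ * (n * (1 - u / v)) := by gcongr; linarith
    _ = n * (v - u) / (u ^ n * v) := by field_simp
    _ ≤ n * (v - u) / (u ^ n * u) := by gcongr
    _ = n * (v - u) / u ^ (n + 1) := by rw [pow_succ]

lemma div_mul_inv_pow_sub_inv_pow_le {Q M u v : ℝ} {n : ℕ} (hn : n ≠ 0) (hu : 0 < u)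
    (huv : u ≤ v) (hQ : Q ≤ u ^ (n + 1) * M) (hQ0 : 0 ≤ Q) :
    Q / n * ((u ^ n)⁻¹ - (v ^ n)⁻¹) ≤ (v - u) * M := by
  have hn' : (n : ℝ) ≠ 0 := Nat.cast_ne_zero.2 hn
  calc Q / n * ((u ^ n)⁻¹ - (v ^ n)⁻¹) ≤ Q / n * (n * (v - u) / u ^ (n + 1)) :=
        mul_le_mul_of_nonneg_left (inv_pow_sub_inv_pow_le hu huv n) (by positivity)
    _ = (v - u) * (Q / u ^ (n + 1)) := by field_simp
    _ ≤ (v - u) * M := by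
        refine mul_le_mul_of_nonneg_left ?_ (by linarith)
        rwa [div_le_iff₀ (by positivity), mul_comm]

theorem inv_pow_sub_le_Ebox_sub (hd : 0 < d) (hK : 0 < K) (hΓ : RelDense Γ K Q)
    (hV : BddPot V) {Z : Finset (Zd d)} (hΛ : (Z.biUnion (cell K)).Nonempty) {a b : ℝ}
    (ha : 0 ≤ a) (hab : a ≤ b) (hb : b ≤ a + 1) :
    (Q : ℝ) / ((2 * d * K - 1 : ℕ) : ℝ) *
        (((2 * (d : ℝ) + 1 + spr V + a) ^ (2 * d * K - 1))⁻¹ -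
          ((2 * (d : ℝ) + 1 + spr V + b) ^ (2 * d * K - 1))⁻¹) ≤
      Ebox (fun x => V x + b * chi Γ x) (Z.biUnion (cell K)) -
        Ebox (fun x => V x + a * chi Γ x) (Z.biUnion (cell K)) := by
  obtain ⟨ψ, hψ, hψ1, hψE, hψeig⟩ := exists_ground_state (fun x => V x + b * chi Γ x) hΛ
  have hE : sInf (Set.range V) ≤ Ebox (fun x => V x + b * chi Γ x) (Z.biUnion (cell K)) :=
    hψE ▸ le_energy_of_norm2_eq_one (sInf_range_le_add_mul_chi hV Γ (ha.trans hab))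
      (hasFiniteSupport_of_vanishing_off hψeig.1) hψ1
  have hM := le_pow_mul_finsum_chi_of_eigOn hd hK hΓ hV (ha.trans hab) hψ hψ1 hψeig hE
  obtain ⟨hn, hn0⟩ : 2 * d * K - 1 + 1 = 2 * d * K ∧ 2 * d * K - 1 ≠ 0 := by
    have : 0 < d * K := Nat.mul_pos hd hK
    have : 2 * d * K = 2 * (d * K) := by ring
    omega
  have hY : 0 ≤ 2 * (d : ℝ) + spr V := by
    linarith [spr_nonneg hV, (Nat.cast_nonneg d : (0 : ℝ) ≤ d)]
  have hQ : (Q : ℝ) ≤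
      (2 * (d : ℝ) + 1 + spr V + a) ^ (2 * d * K - 1 + 1) * ∑ᶠ x, chi Γ x * ψ x ^ 2 := by
    rw [hn]
    exact hM.trans (mul_le_mul_of_nonneg_right (pow_le_pow_left₀ (by linarith) (by linarith) _)
      (finsum_chi_mul_sq_nonneg Γ ψ))
  have := div_mul_inv_pow_sub_inv_pow_le hn0 (by linarith)
    (by linarith : 2 * (d : ℝ) + 1 + spr V + a ≤ 2 * d + 1 + spr V + b) hQ (Nat.cast_nonneg Q)
  rw [show 2 * (d : ℝ) + 1 + spr V + b - (2 * d + 1 + spr V + a) = b - a by ring] at this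
  exact this.trans
    (sub_mul_finsum_le_Ebox_sub (sInf_range_le_add_mul_chi hV Γ ha) hψeig.1 hψ1 hψE)

lemma sub_le_sub_of_forall_sub_le_sub {f g : ℝ → ℝ} {δ : ℝ} (hδ : 0 < δ)
    (h : ∀ a b, 0 ≤ a → a ≤ b → b ≤ a + δ → g b - g a ≤ f b - f a) {a b : ℝ} (ha : 0 ≤ a)
    (hab : a ≤ b) : g b - g a ≤ f b - f a := by
  obtain ⟨N, hN⟩ := exists_nat_ge ((b - a) / δ)
  rw [div_le_iff₀ hδ] at hN
  induction N generalizing a with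
  | zero =>
    obtain rfl : b = a := by simp at hN; linarith
    simp
  | succ N ih =>
    rcases le_total b (a + δ) with hb | hb
    · exact h a b ha hab hb
    · have := ih (by linarith : 0 ≤ a + δ) hb (by push_cast at hN; linarith)
      linarith [h a (a + δ) ha (by linarith) le_rfl]

end Schrodinger

open Schrodinger

theorem stmt13_general (d K Q : ℕ) (hd : 0 < d) (hK : 0 < K)
    (Γ : Set (Zd d)) (hΓ : RelDense Γ K Q)
    (V : Zd d → ℝ) (hV : BddPot V) :
    ∀ t : ℝ, 0 ≤ t →
      (Q : ℝ) / ((2 * d * K - 1 : ℕ) : ℝ) *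
        (((2 * (d : ℝ) + 1 + spr V) ^ (2 * d * K - 1))⁻¹ -
          ((2 * (d : ℝ) + 1 + spr V + t) ^ (2 * d * K - 1))⁻¹) ≤
      EGt V Γ t - E0 V := by
  intro t ht
  rw [le_sub_iff_add_le', EGt]
  refine le_csInf ⟨_, Pi.single 0 1, (Set.finite_singleton 0).subset Pi.support_single_subset,
    norm2_single 0, rfl⟩ ?_
  rintro _ ⟨φ, hφ, hφ1, rfl⟩
  obtain ⟨Z, hΛ, hφΛ⟩ := exists_cells_cover hK hφ
  have hmono := sub_le_sub_of_forall_sub_le_sub one_pos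
    (f := fun s => Ebox (fun x => V x + s * chi Γ x) (Z.biUnion (cell K)))
    (g := fun s => -((Q : ℝ) / ((2 * d * K - 1 : ℕ) : ℝ) *
      ((2 * (d : ℝ) + 1 + spr V + s) ^ (2 * d * K - 1))⁻¹))
    (fun a b ha hab hb => by
      have := inv_pow_sub_le_Ebox_sub hd hK hΓ hV hΛ ha hab hb
      linarith) le_rfl ht
  have h0 : E0 V ≤ Ebox (fun x => V x + 0 * chi Γ x) (Z.biUnion (cell K)) := by
    simpa using E0_le_Ebox hV hΛ
  have ht' := Ebox_le_energy (sInf_range_le_add_mul_chi hV Γ ht) hφΛ hφ1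
  simp only [add_zero] at hmono
  linarith

/-- for `Γ ⊊ ℤ^d` `(K,Q)`-relatively dense and all `t ≥ 0`,
`E_Γ(H,t) - E_∅(H) ≥ (Q/(2dK-1)) (Y^{-(2dK-1)} - (Y+t)^{-(2dK-1)})`,
where `Y = 2d + 1 + spr(V)`. -/
theorem stmt13 (d K Q : ℕ) (hd : 0 < d) (hK : 0 < K) (hQ : 0 < Q)
    (Γ : Set (Zd d)) (hne : Γ ≠ Set.univ) (hΓ : RelDense Γ K Q)
    (V : Zd d → ℝ) (hV : BddPot V) :
    ∀ t : ℝ, 0 ≤ t →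
      (Q : ℝ) / ((2 * d * K - 1 : ℕ) : ℝ) *
        (((2 * (d : ℝ) + 1 + spr V) ^ (2 * d * K - 1))⁻¹ -
          ((2 * (d : ℝ) + 1 + spr V + t) ^ (2 * d * K - 1))⁻¹) ≤
      EGt V Γ t - E0 V :=
  stmt13_general d K Q hd hK Γ hΓ V hV
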